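/- arXiv:2604.09340 — 2 statements merged into one kernel-verified Lean document; each statement's English description precedes it below -/
import Mathlib

section
/- In the constant-marginal-cost posted-price model, let V^{pp} := {(CS_G(r), Π_G(r)) : G a Borel probability measure on [0,1], r ∈ R*(G)}, let A := Q̄·(1−M), and define f(0) := 0 and f(π) := π·ln(A/π) for π ∈ (0,A]. Then: (i) V^{pp} = {(c,π) ∈ ℝ₊² : 0 ≤ π ≤ A and 0 ≤ c ≤ f(π)}; (ii) V^{pp} is compact and convex; (iii) the Pareto frontier of V^{pp} (points of V^{pp} not dominated by any other point of V^{pp} coordinatewise with at least one strict inequality) coincides with its supported frontier (points maximizing k·c + (1−k)·π over V^{pp} for some k ∈ [0,1]) and equals {(f(π), π) : π ∈ [A/e, A]}. -/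
/-!
A seller-optimal cutoff `r` caps the survival function on `(r, 1]` by the unit-elastic curve
`(r - M) S(r) / (v - M)`, so consumer surplus is at most `f(Π)`; truncated Pareto markets, whose
survival function is exactly such a curve, attain every point below the graph of `f`. Since `f` is
concave with maximum `A / e` at `A / e`, the region is compact and convex, and its Pareto frontier
is the decreasing branch of the graph, each point of which is supported by its tangent line.
-/

open MeasureTheory Set Filter

namespace PostedPrice

/-- `G` is a Borel probability measure on `[0,1]`. -/
def ProbOn01 (G : Measure ℝ) : Prop :=
  IsProbabilityMeasure G ∧ G (Set.Icc 0 1) = 1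

/-- Survival function `S_G(v) = G([v,1])`. -/
noncomputable def SG (G : Measure ℝ) (v : ℝ) : ℝ := (G (Set.Icc v 1)).toReal

/-- Seller profit from posting cutoff price `r`: `Π_G(r) = Q̄·(r−M)·S_G(r)`. -/
noncomputable def PiG (Qbar M : ℝ) (G : Measure ℝ) (r : ℝ) : ℝ :=
  Qbar * (r - M) * SG G r

/-- Consumer surplus from cutoff price `r`: `CS_G(r) = Q̄·∫_r^1 S_G(v) dv`. -/
noncomputable def CSG (Qbar : ℝ) (G : Measure ℝ) (r : ℝ) : ℝ :=
  Qbar * ∫ v in r..1, SG G v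

/-- The seller-optimal posted-price cutoffs `R*(G)`. -/
def Rstar (M : ℝ) (G : Measure ℝ) : Set ℝ :=
  {r ∈ Set.Icc M 1 | ∀ r' ∈ Set.Icc M 1, (r' - M) * SG G r' ≤ (r - M) * SG G r}

/-- Weighted objective `J_k(G,r)`. -/
noncomputable def Jpp (Qbar M k : ℝ) (G : Measure ℝ) (r : ℝ) : ℝ :=
  k * CSG Qbar G r + (1 - k) * PiG Qbar M G r

/-- Optimal value of the upstream problem, `V_k^{pp}`. -/
noncomputable def Vpp (Qbar M k : ℝ) : ℝ :=
  sSup {x | ∃ G : Measure ℝ, ProbOn01 G ∧ ∃ r ∈ Rstar M G, x = Jpp Qbar M k G r}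

/-- `r_k = M + (1−M)·e^{−(2k−1)/k}`. -/
noncomputable def rkFun (M k : ℝ) : ℝ := M + (1 - M) * Real.exp (-(2*k - 1)/k)

/-- CDF of the optimal market composition `G_k` for `k ∈ (1/2,1]`. -/
noncomputable def GkCDF (M k v : ℝ) : ℝ :=
  if v < rkFun M k then 0
  else if v < 1 then 1 - (rkFun M k - M) / (v - M)
  else 1


/-- The set of implementable seller-optimal posted-price pairs `(CS, Π)`. -/
def VppSet (Qbar M : ℝ) : Set (ℝ × ℝ) :=
  {p | ∃ G : Measure ℝ, ProbOn01 G ∧ ∃ r ∈ Rstar M G, p = (CSG Qbar G r, PiG Qbar M G r)}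

/-- The boundary function `f(π) = π·ln(A/π)` (with `f(0) = 0`). -/
noncomputable def fBoundary (A pi : ℝ) : ℝ :=
  if pi = 0 then 0 else pi * Real.log (A / pi)

/-- Pareto frontier of a set of (consumer surplus, profit) pairs. -/
def ParetoFrontier (V : Set (ℝ × ℝ)) : Set (ℝ × ℝ) :=
  {p ∈ V | ¬ ∃ p' ∈ V, p.1 ≤ p'.1 ∧ p.2 ≤ p'.2 ∧ (p.1 < p'.1 ∨ p.2 < p'.2)}

/-- Supported frontier: points maximizing `k·c + (1−k)·π` over `V` for some `k ∈ [0,1]`. -/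
def SupportedFrontier (V : Set (ℝ × ℝ)) : Set (ℝ × ℝ) :=
  {p ∈ V | ∃ k ∈ Set.Icc (0:ℝ) 1,
    ∀ p' ∈ V, k * p'.1 + (1 - k) * p'.2 ≤ k * p.1 + (1 - k) * p.2}

open Real

lemma fBoundary_zero (A : ℝ) : fBoundary A 0 = 0 := if_pos rfl

lemma fBoundary_eq_mul_log (A x : ℝ) : fBoundary A x = x * log (A / x) := by
  unfold fBoundary
  split_ifs with hx <;> simp [hx]

lemma fBoundary_eq_negMulLog {A : ℝ} (hA : A ≠ 0) (x : ℝ) :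
    fBoundary A x = x * log A + negMulLog x := by
  rcases eq_or_ne x 0 with rfl | hx
  · simp [fBoundary_zero]
  · rw [fBoundary_eq_mul_log, log_div hA hx, negMulLog]
    ring

lemma fBoundary_mul_mul (c A x : ℝ) : fBoundary (c * A) (c * x) = c * fBoundary A x := by
  rcases eq_or_ne c 0 with rfl | hc
  · simp [fBoundary_zero]
  rw [fBoundary_eq_mul_log, fBoundary_eq_mul_log, mul_div_mul_left _ _ hc, mul_assoc]

lemma continuous_fBoundary {A : ℝ} (hA : A ≠ 0) : Continuous (fBoundary A) := by
  simp_rw [funext (fBoundary_eq_negMulLog hA)]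
  fun_prop

lemma concaveOn_fBoundary {A : ℝ} (hA : A ≠ 0) : ConcaveOn ℝ (Ici 0) (fBoundary A) := by
  rw [funext (fBoundary_eq_negMulLog hA)]
  exact ((LinearMap.mulRight ℝ (log A)).concaveOn (convex_Ici 0)).add concaveOn_negMulLog

lemma fBoundary_nonneg {A x : ℝ} (hx : 0 ≤ x) (hxA : x ≤ A) : 0 ≤ fBoundary A x := by
  rcases hx.eq_or_lt with rfl | hx
  · rw [fBoundary_zero]
  · rw [fBoundary_eq_mul_log]
    exact mul_nonneg hx.le (log_nonneg ((one_le_div hx).2 hxA))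

lemma fBoundary_self (A : ℝ) : fBoundary A A = 0 := by
  rcases eq_or_ne A 0 with rfl | hA
  · exact fBoundary_zero 0
  · rw [fBoundary_eq_mul_log, div_self hA, log_one, mul_zero]

lemma log_div_div_exp_one {A : ℝ} (hA : A ≠ 0) : log (A / (A / exp 1)) = 1 := by
  rw [div_div_cancel₀ hA, log_exp]

lemma fBoundary_div_exp_one {A : ℝ} (hA : A ≠ 0) : fBoundary A (A / exp 1) = A / exp 1 := by
  rw [fBoundary_eq_mul_log, log_div_div_exp_one hA, mul_one]

lemma fBoundary_lt_tangent {A x y : ℝ} (hA : 0 < A) (hx : 0 < x) (hy : 0 ≤ y) (hxy : y ≠ x) :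
    fBoundary A y < fBoundary A x + (log (A / x) - 1) * (y - x) := by
  rcases hy.eq_or_lt with rfl | hy
  · rw [fBoundary_zero, fBoundary_eq_mul_log]
    linarith
  have hlog : log (x / y) < x / y - 1 :=
    log_lt_sub_one_of_pos (div_pos hx hy) (by rwa [ne_eq, div_eq_one_iff_eq hy.ne', eq_comm])
  have key : y * log (x / y) < x - y := by
    calc y * log (x / y) < y * (x / y - 1) := mul_lt_mul_of_pos_left hlog hy
      _ = x - y := by field_simp
  rw [fBoundary_eq_mul_log, fBoundary_eq_mul_log, log_div hA.ne' hy.ne',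
    log_div hA.ne' hx.ne']
  rw [log_div hx.ne' hy.ne'] at key
  linarith

lemma fBoundary_le_tangent {A x y : ℝ} (hA : 0 < A) (hx : 0 < x) (hy : 0 ≤ y) :
    fBoundary A y ≤ fBoundary A x + (log (A / x) - 1) * (y - x) := by
  rcases eq_or_ne y x with rfl | hxy
  · simp
  · exact (fBoundary_lt_tangent hA hx hy hxy).le

lemma fBoundary_lt_div_exp_one {A y : ℝ} (hA : 0 < A) (hy : 0 ≤ y) (hyA : y ≠ A / exp 1) :
    fBoundary A y < A / exp 1 := by
  simpa [fBoundary_div_exp_one hA.ne', log_div_div_exp_one hA.ne'] using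
    fBoundary_lt_tangent hA (by positivity) hy hyA

lemma fBoundary_le_div_exp_one {A y : ℝ} (hA : 0 < A) (hy : 0 ≤ y) :
    fBoundary A y ≤ A / exp 1 := by
  rcases eq_or_ne y (A / exp 1) with rfl | hyA
  · exact (fBoundary_div_exp_one hA.ne').le
  · exact (fBoundary_lt_div_exp_one hA hy hyA).le

lemma div_exp_one_mem_Icc {A : ℝ} (hA : 0 ≤ A) : A / exp 1 ∈ Icc 0 A :=
  ⟨by positivity, div_le_self hA (one_le_exp zero_le_one)⟩

lemma log_div_le_one {A x : ℝ} (hA : 0 < A) (hx : A / exp 1 ≤ x) : log (A / x) ≤ 1 := by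
  have hx0 : 0 < x := (by positivity : 0 < A / exp 1).trans_le hx
  rw [← log_div_div_exp_one hA.ne']
  exact log_le_log (by positivity) (div_le_div_of_nonneg_left hA.le (by positivity) hx)

lemma fBoundary_strictAntiOn {A : ℝ} (hA : 0 < A) :
    StrictAntiOn (fBoundary A) (Ici (A / exp 1)) := by
  intro x hx y _ hxy
  have hx0 : 0 < x := lt_of_lt_of_le (by positivity) hx
  have := fBoundary_lt_tangent hA hx0 (hx0.trans hxy).le hxy.ne'
  nlinarith [log_div_le_one hA hx]

def boundaryRegion (A : ℝ) : Set (ℝ × ℝ) :=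
  {p | 0 ≤ p.2 ∧ p.2 ≤ A ∧ 0 ≤ p.1 ∧ p.1 ≤ fBoundary A p.2}

def efficientArc (A : ℝ) : Set (ℝ × ℝ) :=
  {p | ∃ pi ∈ Icc (A / exp 1) A, p = (fBoundary A pi, pi)}

section Geometry

variable {A : ℝ}

lemma graph_mem_boundaryRegion {x : ℝ} (hx : 0 ≤ x) (hxA : x ≤ A) :
    (fBoundary A x, x) ∈ boundaryRegion A :=
  ⟨hx, hxA, fBoundary_nonneg hx hxA, le_rfl⟩

lemma isCompact_boundaryRegion (hA : 0 < A) : IsCompact (boundaryRegion A) := by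
  have hclosed : IsClosed (boundaryRegion A) :=
    (isClosed_le continuous_const continuous_snd).inter <|
      (isClosed_le continuous_snd continuous_const).inter <|
      (isClosed_le continuous_const continuous_fst).inter <|
      isClosed_le continuous_fst ((continuous_fBoundary hA.ne').comp continuous_snd)
  refine ((isCompact_Icc (a := 0) (b := A / exp 1)).prod (isCompact_Icc (a := 0) (b := A))
    ).of_isClosed_subset hclosed ?_
  rintro p ⟨h0, hA', hc0, hcf⟩
  exact ⟨⟨hc0, hcf.trans (fBoundary_le_div_exp_one hA h0)⟩, h0, hA'⟩

lemma convex_boundaryRegion (hA : 0 < A) : Convex ℝ (boundaryRegion A) := by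
  rintro ⟨c₁, x₁⟩ ⟨hx₁, hx₁A, hc₁, hc₁f⟩ ⟨c₂, x₂⟩ ⟨hx₂, hx₂A, hc₂, hc₂f⟩ a b ha hb hab
  have hx : a * x₁ + b * x₂ ∈ Icc 0 A := convex_Icc 0 A ⟨hx₁, hx₁A⟩ ⟨hx₂, hx₂A⟩ ha hb hab
  refine ⟨hx.1, hx.2, add_nonneg (mul_nonneg ha hc₁) (mul_nonneg hb hc₂), ?_⟩
  calc a * c₁ + b * c₂ ≤ a * fBoundary A x₁ + b * fBoundary A x₂ := by gcongr
    _ ≤ fBoundary A (a * x₁ + b * x₂) := (concaveOn_fBoundary hA.ne').2 hx₁ hx₂ ha hb hab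

lemma paretoFrontier_boundaryRegion_subset (hA : 0 < A) :
    ParetoFrontier (boundaryRegion A) ⊆ efficientArc A := by
  rintro ⟨c, x⟩ ⟨⟨hx : 0 ≤ x, hxA : x ≤ A, -, hcf : c ≤ fBoundary A x⟩, hnd⟩
  have hc : c = fBoundary A x := by
    by_contra hne
    exact hnd ⟨_, graph_mem_boundaryRegion hx hxA, hcf, le_rfl, .inl (hcf.lt_of_ne hne)⟩
  have hx' : A / exp 1 ≤ x := by
    by_contra! hlt
    have hpeak := div_exp_one_mem_Icc hA.le
    refine hnd ⟨_, graph_mem_boundaryRegion hpeak.1 hpeak.2, ?_, hlt.le, .inr hlt⟩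
    rw [hc, fBoundary_div_exp_one hA.ne']
    exact fBoundary_le_div_exp_one hA hx
  exact ⟨x, ⟨hx', hxA⟩, by rw [hc]⟩

lemma efficientArc_subset_paretoFrontier (hA : 0 < A) :
    efficientArc A ⊆ ParetoFrontier (boundaryRegion A) := by
  rintro _ ⟨x, ⟨hx, hxA⟩, rfl⟩
  refine ⟨graph_mem_boundaryRegion ((div_exp_one_mem_Icc hA.le).1.trans hx) hxA, ?_⟩
  rintro ⟨⟨c', y⟩, ⟨-, hyA, -, hc' : c' ≤ fBoundary A y⟩, hc : fBoundary A x ≤ c', hxy : x ≤ y,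
    hlt⟩
  rcases hxy.eq_or_lt with rfl | hxy
  · dsimp only at hlt
    rcases hlt with hlt | hlt <;> linarith
  · have := fBoundary_strictAntiOn hA hx (hx.trans hxy.le) hxy
    linarith

lemma supportedFrontier_boundaryRegion_subset (hA : 0 < A) :
    SupportedFrontier (boundaryRegion A) ⊆ efficientArc A := by
  rintro ⟨c, x⟩ ⟨⟨hx : 0 ≤ x, hxA : x ≤ A, hc0 : 0 ≤ c, hcf : c ≤ fBoundary A x⟩, k, ⟨hk0, hk1⟩,
    hmax⟩
  rcases hk0.eq_or_lt with rfl | hk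
  · have hxA' : A ≤ x := by simpa using hmax _ (graph_mem_boundaryRegion hA.le le_rfl)
    obtain rfl := le_antisymm hxA hxA'
    have hc : c = fBoundary x x := le_antisymm hcf (by rw [fBoundary_self]; exact hc0)
    exact ⟨x, ⟨(div_exp_one_mem_Icc hA.le).2, le_rfl⟩, by rw [hc]⟩
  have hc : c = fBoundary A x := by
    refine le_antisymm hcf (le_of_mul_le_mul_left ?_ hk)
    simpa using hmax _ (graph_mem_boundaryRegion hx hxA)
  have hx' : A / exp 1 ≤ x := by
    by_contra! hlt
    have hpeak := div_exp_one_mem_Icc hA.le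
    have hpk := hmax _ (graph_mem_boundaryRegion hpeak.1 hpeak.2)
    have := fBoundary_lt_div_exp_one hA hx hlt.ne
    rw [fBoundary_div_exp_one hA.ne'] at hpk
    dsimp only at hpk
    subst hc
    nlinarith
  exact ⟨x, ⟨hx', hxA⟩, by rw [hc]⟩

lemma efficientArc_subset_supportedFrontier (hA : 0 < A) :
    efficientArc A ⊆ SupportedFrontier (boundaryRegion A) := by
  rintro _ ⟨x, ⟨hx, hxA⟩, rfl⟩
  have hx0 : 0 < x := lt_of_lt_of_le (by positivity) hx
  refine ⟨graph_mem_boundaryRegion hx0.le hxA, ?_⟩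
  -- `k` makes the level lines of `k c + (1 - k) π` parallel to the tangent at `x`,
  -- whose slope `log (A / x) - 1` lies in `[-1, 0]`.
  set t := log (A / x)
  have ht0 : 0 ≤ t := log_nonneg ((one_le_div hx0).2 hxA)
  have ht1 : t ≤ 1 := log_div_le_one hA hx
  have h2t : 0 < 2 - t := by linarith
  set k := 1 / (2 - t)
  have hk : k * (t - 1) + (1 - k) = 0 := by linear_combination -(one_div_mul_cancel h2t.ne')
  refine ⟨k, ⟨by positivity, (div_le_one h2t).2 (by linarith)⟩, ?_⟩
  rintro ⟨c', y⟩ ⟨hy, -, -, hc'⟩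
  calc k * c' + (1 - k) * y ≤ k * (fBoundary A x + (t - 1) * (y - x)) + (1 - k) * y := by
        gcongr
        exact hc'.trans (fBoundary_le_tangent hA hx0 hy)
    _ = k * fBoundary A x + (1 - k) * x + (y - x) * (k * (t - 1) + (1 - k)) := by ring
    _ = k * fBoundary A x + (1 - k) * x := by rw [hk]; ring

lemma paretoFrontier_boundaryRegion (hA : 0 < A) :
    ParetoFrontier (boundaryRegion A) = efficientArc A :=
  (paretoFrontier_boundaryRegion_subset hA).antisymm (efficientArc_subset_paretoFrontier hA)

lemma supportedFrontier_boundaryRegion (hA : 0 < A) :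
    SupportedFrontier (boundaryRegion A) = efficientArc A :=
  (supportedFrontier_boundaryRegion_subset hA).antisymm (efficientArc_subset_supportedFrontier hA)

end Geometry

section Survival

variable {G : Measure ℝ} {M r : ℝ}

lemma SG_nonneg (G : Measure ℝ) (v : ℝ) : 0 ≤ SG G v := ENNReal.toReal_nonneg

lemma SG_le_one [IsProbabilityMeasure G] (v : ℝ) : SG G v ≤ 1 :=
  ENNReal.toReal_le_of_le_ofReal zero_le_one (by simpa using prob_le_one)

lemma antitone_SG [IsFiniteMeasure G] : Antitone (SG G) := fun _ _ huv =>
  ENNReal.toReal_mono (measure_ne_top G _) (measure_mono (Icc_subset_Icc_left huv))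

lemma integral_div_sub (p : ℝ) {M a b : ℝ} (ha : M < a) (hb : M < b) :
    ∫ v in a..b, p / (v - M) = p * log ((b - M) / (a - M)) := by
  simp_rw [div_eq_mul_inv p]
  rw [intervalIntegral.integral_const_mul, intervalIntegral.integral_comp_sub_right (·⁻¹) M,
    integral_inv (notMem_uIcc_of_lt (sub_pos.2 ha) (sub_pos.2 hb))]

lemma SG_le_of_mem_Rstar (hr : r ∈ Rstar M G) {v : ℝ} (hv : v ∈ Ioc M 1) :
    SG G v ≤ (r - M) * SG G r / (v - M) := by
  rw [le_div_iff₀ (sub_pos.2 hv.1), mul_comm]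
  exact hr.2 v ⟨hv.1.le, hv.2⟩

lemma integral_SG_le_fBoundary [IsProbabilityMeasure G] (hr : r ∈ Rstar M G) :
    ∫ v in r..1, SG G v ≤ fBoundary (1 - M) ((r - M) * SG G r) := by
  obtain ⟨hMr, hr1⟩ := hr.1
  set p := (r - M) * SG G r
  have hp : 0 ≤ p := mul_nonneg (sub_nonneg.2 hMr) (SG_nonneg G r)
  have hle : ∀ v ∈ Ioo r 1, SG G v ≤ p / (v - M) := fun v hv =>
    SG_le_of_mem_Rstar hr ⟨hMr.trans_lt hv.1, hv.2.le⟩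
  have hSint : IntervalIntegrable (SG G) volume r 1 := (antitone_SG.antitoneOn _).intervalIntegrable
  rcases hp.eq_or_lt with hp0 | hp0
  · rw [← hp0, fBoundary_zero]
    calc ∫ v in r..1, SG G v ≤ ∫ _ in r..1, (0 : ℝ) :=
          intervalIntegral.integral_mono_on_of_le_Ioo hr1 hSint intervalIntegrable_const
            fun v hv => by simpa [← hp0] using hle v hv
      _ = 0 := intervalIntegral.integral_zero
  have hrM : M < r := sub_pos.1 (pos_of_mul_pos_left hp0 (SG_nonneg G r))
  have hpr : p ≤ r - M := mul_le_of_le_one_right (sub_nonneg.2 hMr) (SG_le_one r)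
  calc ∫ v in r..1, SG G v ≤ ∫ v in r..1, p / (v - M) := by
        refine intervalIntegral.integral_mono_on_of_le_Ioo hr1 hSint ?_ hle
        refine (continuousOn_const.div (by fun_prop) fun v hv => ?_).intervalIntegrable
        rw [uIcc_of_le hr1] at hv
        exact (sub_pos.2 (hrM.trans_le hv.1)).ne'
    _ = p * log ((1 - M) / (r - M)) := integral_div_sub p hrM (hrM.trans_le hr1)
    _ ≤ p * log ((1 - M) / p) := by
        have h1M : 0 < 1 - M := by linarith
        gcongr
    _ = fBoundary (1 - M) p := (fBoundary_eq_mul_log _ p).symm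

lemma mem_boundaryRegion_of_mem_Rstar [IsProbabilityMeasure G] (hr : r ∈ Rstar M G) :
    (∫ v in r..1, SG G v, (r - M) * SG G r) ∈ boundaryRegion (1 - M) :=
  ⟨mul_nonneg (sub_nonneg.2 hr.1.1) (SG_nonneg G r),
    (mul_le_of_le_one_right (sub_nonneg.2 hr.1.1) (SG_le_one r)).trans (by linarith [hr.1.2]),
    intervalIntegral.integral_nonneg hr.1.2 fun v _ => SG_nonneg G v,
    integral_SG_le_fBoundary hr⟩

end Survival

/-- Under the uniform distribution on `(0, 1]` its law has survival function
`min b (p / (v - M))` on `(M, 1]`: unit-elastic demand `(v - M) S(v) = p` above the price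
`M + p / b`. -/
noncomputable def paretoQuantile (M p b u : ℝ) : ℝ := if u ≤ b then min 1 (M + p / u) else M

noncomputable def truncatedPareto (M p b : ℝ) : Measure ℝ :=
  (volume.restrict (Ioc 0 1)).map (paretoQuantile M p b)

section TruncatedPareto

variable {M p b : ℝ}

lemma measurable_paretoQuantile : Measurable (paretoQuantile M p b) :=
  Measurable.ite measurableSet_Iic (by fun_prop) measurable_const

lemma truncatedPareto_apply {s : Set ℝ} (hs : MeasurableSet s) :
    truncatedPareto M p b s = volume (paretoQuantile M p b ⁻¹' s ∩ Ioc 0 1) := by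
  rw [truncatedPareto, Measure.map_apply measurable_paretoQuantile hs,
    Measure.restrict_apply (measurable_paretoQuantile hs)]

lemma paretoQuantile_mem_Icc (hM : M ∈ Icc 0 1) (hp : 0 ≤ p) {u : ℝ} (hu : 0 < u) :
    paretoQuantile M p b u ∈ Icc 0 1 := by
  unfold paretoQuantile
  split_ifs
  · exact ⟨le_min zero_le_one (by have := hM.1; positivity), min_le_left _ _⟩
  · exact hM

lemma probOn01_truncatedPareto (hM : M ∈ Icc 0 1) (hp : 0 ≤ p) :
    ProbOn01 (truncatedPareto M p b) := by
  have hfull : ∀ s, Icc 0 1 ⊆ s → MeasurableSet s → truncatedPareto M p b s = 1 := by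
    intro s hs hsm
    have hpre : Ioc 0 1 ⊆ paretoQuantile M p b ⁻¹' s := fun u hu =>
      hs (paretoQuantile_mem_Icc hM hp hu.1)
    rw [truncatedPareto_apply hsm, inter_eq_right.2 hpre]
    simp
  exact ⟨⟨hfull univ (subset_univ _) MeasurableSet.univ⟩, hfull _ subset_rfl measurableSet_Icc⟩

lemma SG_truncatedPareto (hp : 0 ≤ p) (hb : b ∈ Icc 0 1) {v : ℝ} (hv : v ∈ Ioc M 1) :
    SG (truncatedPareto M p b) v = min b (p / (v - M)) := by
  have hvM : 0 < v - M := sub_pos.2 hv.1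
  have hset : paretoQuantile M p b ⁻¹' Icc v 1 ∩ Ioc 0 1 = Ioc 0 (min b (p / (v - M))) := by
    ext u
    simp only [paretoQuantile, mem_inter_iff, mem_preimage, mem_Icc, mem_Ioc, le_min_iff]
    constructor
    · rintro ⟨⟨hvu, -⟩, hu0, -⟩
      split_ifs at hvu with hub
      · refine ⟨hu0, hub, ?_⟩
        rw [le_min_iff, ← sub_le_iff_le_add', le_div_iff₀ hu0] at hvu
        rw [le_div_iff₀ hvM, mul_comm]
        exact hvu.2
      · exact absurd hvu hv.1.not_ge
    · rintro ⟨hu0, hub, huw⟩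
      refine ⟨?_, hu0, hub.trans hb.2⟩
      rw [if_pos hub, le_min_iff, ← sub_le_iff_le_add', le_div_iff₀ hu0, mul_comm]
      rw [le_div_iff₀ hvM] at huw
      exact ⟨⟨hv.2, huw⟩, min_le_left _ _⟩
  rw [SG, truncatedPareto_apply measurableSet_Icc, hset, Real.volume_Ioc, sub_zero,
    ENNReal.toReal_ofReal (le_min hb.1 (div_nonneg hp hvM.le))]

end TruncatedPareto

section Realization

variable {M p r : ℝ}

lemma div_sub_mem_Icc (hp : 0 ≤ p) (hpr : p ≤ r - M) : p / (r - M) ∈ Icc 0 1 :=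
  ⟨div_nonneg hp (hp.trans hpr), div_le_one_of_le₀ hpr (hp.trans hpr)⟩

lemma SG_truncatedPareto_of_le (hp : 0 ≤ p) (hpr : p ≤ r - M) (hMr : M < r) {v : ℝ}
    (hv : v ∈ Icc r 1) : SG (truncatedPareto M p (p / (r - M))) v = p / (v - M) := by
  rw [SG_truncatedPareto hp (div_sub_mem_Icc hp hpr) ⟨hMr.trans_le hv.1, hv.2⟩, min_eq_right]
  exact div_le_div_of_nonneg_left hp (sub_pos.2 hMr) (sub_le_sub_right hv.1 M)

lemma mem_Rstar_truncatedPareto (hp : 0 ≤ p) (hpr : p ≤ r - M) (hMr : M < r) (hr1 : r ≤ 1) :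
    r ∈ Rstar M (truncatedPareto M p (p / (r - M))) := by
  refine ⟨⟨hMr.le, hr1⟩, fun r' hr' => ?_⟩
  rw [SG_truncatedPareto_of_le hp hpr hMr ⟨le_rfl, hr1⟩, mul_div_cancel₀ _ (sub_pos.2 hMr).ne']
  rcases hr'.1.eq_or_lt with rfl | hMr'
  · simpa using hp
  calc (r' - M) * SG _ r' ≤ (r' - M) * (p / (r' - M)) := by
        rw [SG_truncatedPareto hp (div_sub_mem_Icc hp hpr) ⟨hMr', hr'.2⟩]
        exact mul_le_mul_of_nonneg_left (min_le_right _ _) (sub_nonneg.2 hr'.1)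
    _ = p := mul_div_cancel₀ _ (sub_pos.2 hMr').ne'

lemma integral_SG_truncatedPareto (hp : 0 ≤ p) (hpr : p ≤ r - M) (hMr : M < r) (hr1 : r ≤ 1) :
    ∫ v in r..1, SG (truncatedPareto M p (p / (r - M))) v = p * log ((1 - M) / (r - M)) := by
  rw [intervalIntegral.integral_congr fun v hv =>
    SG_truncatedPareto_of_le hp hpr hMr (by rwa [uIcc_of_le hr1] at hv)]
  exact integral_div_sub p hMr (hMr.trans_le hr1)

lemma exists_mem_Rstar_of_mem_boundaryRegion (hM : M ∈ Ico 0 1) {q : ℝ × ℝ}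
    (hq : q ∈ boundaryRegion (1 - M)) :
    ∃ G, ProbOn01 G ∧ ∃ r ∈ Rstar M G, q = (∫ v in r..1, SG G v, (r - M) * SG G r) := by
  obtain ⟨c, p⟩ := q
  obtain ⟨hp : 0 ≤ p, -, hc : 0 ≤ c, hcf : c ≤ fBoundary (1 - M) p⟩ := hq
  have h1M : 0 < 1 - M := sub_pos.2 hM.2
  -- With cutoff `r`, the truncated Pareto market gives `CS / Π = log ((1 - M) / (r - M))`.
  set t := c / p
  set r := M + (1 - M) * exp (-t)
  have ht : 0 ≤ t := div_nonneg hc hp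
  have hrM : r - M = (1 - M) * exp (-t) := add_sub_cancel_left M _
  have hMr : M < r := sub_pos.1 (by rw [hrM]; positivity)
  have hr1 : r ≤ 1 := by
    have : exp (-t) ≤ 1 := exp_le_one_iff.2 (neg_nonpos.2 ht)
    nlinarith
  have hlog : log ((1 - M) / (r - M)) = t := by
    rw [hrM, div_mul_cancel_left₀ h1M.ne', log_inv, log_exp, neg_neg]
  rw [fBoundary_eq_mul_log] at hcf
  have hpt : p * t = c := by
    rcases hp.eq_or_lt with rfl | hp0
    · simp only [zero_mul] at hcf ⊢
      linarith
    · exact mul_div_cancel₀ c hp0.ne'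
  have hpr : p ≤ r - M := by
    rcases hp.eq_or_lt with rfl | hp0
    · exact (sub_pos.2 hMr).le
    have htlog : t ≤ log ((1 - M) / p) := (div_le_iff₀' hp0).2 hcf
    calc p = (1 - M) * exp (-log ((1 - M) / p)) := by
          rw [exp_neg, exp_log (by positivity)]; field_simp
      _ ≤ r - M := by rw [hrM]; gcongr
  refine ⟨truncatedPareto M p (p / (r - M)), probOn01_truncatedPareto ⟨hM.1, hM.2.le⟩ hp, r,
    mem_Rstar_truncatedPareto hp hpr hMr hr1, ?_⟩
  rw [integral_SG_truncatedPareto hp hpr hMr hr1, hlog, hpt,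
    SG_truncatedPareto_of_le hp hpr hMr ⟨le_rfl, hr1⟩, mul_div_cancel₀ _ (sub_pos.2 hMr).ne']

end Realization

lemma smul_mem_boundaryRegion_iff {c A : ℝ} (hc : 0 < c) {q : ℝ × ℝ} :
    c • q ∈ boundaryRegion (c * A) ↔ q ∈ boundaryRegion A := by
  simp only [boundaryRegion, mem_ofPred_eq, Prod.smul_fst, Prod.smul_snd, smul_eq_mul,
    fBoundary_mul_mul, mul_le_mul_iff_right₀ hc, mul_nonneg_iff_of_pos_left hc]

lemma vppSet_eq {Qbar M : ℝ} (hQbar : 0 < Qbar) (hM : M ∈ Ico 0 1) :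
    VppSet Qbar M = boundaryRegion (Qbar * (1 - M)) := by
  ext q
  constructor
  · rintro ⟨G, ⟨hG, -⟩, r, hr, rfl⟩
    convert (smul_mem_boundaryRegion_iff hQbar).2 (mem_boundaryRegion_of_mem_Rstar hr) using 1
    simp only [CSG, PiG, Prod.smul_mk, smul_eq_mul, mul_assoc]
  · intro hq
    rw [← smul_inv_smul₀ hQbar.ne' q, smul_mem_boundaryRegion_iff hQbar] at hq
    obtain ⟨G, hG, r, hr, hqr⟩ := exists_mem_Rstar_of_mem_boundaryRegion hM hq
    refine ⟨G, hG, r, hr, ?_⟩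
    rw [← smul_inv_smul₀ hQbar.ne' q, hqr]
    simp only [CSG, PiG, Prod.smul_mk, smul_eq_mul, mul_assoc]

/-- geometry of the posted-price benchmark, with `A = Q̄(1−M)`:
(i) `V^{pp}` is the hypograph of `f` over `[0,A]`; (ii) `V^{pp}` is compact and convex;
(iii) its Pareto frontier coincides with its supported frontier and equals
`{(f(π),π) : π ∈ [A/e, A]}`. -/
theorem posted_price_geometry
    (Qbar M : ℝ) (hQbar : 0 < Qbar) (hM : M ∈ Set.Ico (0:ℝ) 1) :
    -- (i)
    VppSet Qbar M
      = {p : ℝ × ℝ | 0 ≤ p.2 ∧ p.2 ≤ Qbar * (1 - M) ∧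
          0 ≤ p.1 ∧ p.1 ≤ fBoundary (Qbar * (1 - M)) p.2} ∧
    -- (ii)
    (IsCompact (VppSet Qbar M) ∧ Convex ℝ (VppSet Qbar M)) ∧
    -- (iii)
    (ParetoFrontier (VppSet Qbar M) = SupportedFrontier (VppSet Qbar M) ∧
     ParetoFrontier (VppSet Qbar M)
       = {p : ℝ × ℝ | ∃ pi ∈ Set.Icc (Qbar * (1 - M) / Real.exp 1) (Qbar * (1 - M)),
            p = (fBoundary (Qbar * (1 - M)) pi, pi)}) := by
  have hA : 0 < Qbar * (1 - M) := mul_pos hQbar (sub_pos.2 hM.2)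
  rw [vppSet_eq hQbar hM]
  exact ⟨rfl, ⟨isCompact_boundaryRegion hA, convex_boundaryRegion hA⟩,
    (paretoFrontier_boundaryRegion hA).trans (supportedFrontier_boundaryRegion hA).symm,
    paretoFrontier_boundaryRegion hA⟩

end PostedPrice
end

section
/- Let G be a Borel probability measure on [0,1] with topological support equal to [v̲,1] for some v̲ ∈ (0,1), whose lower quantile Q_G(u) := inf{v ∈ [0,1] : G([0,v]) ≥ u} is strictly increasing on (0,b) and satisfies Q_G(u) = 1 for all u ∈ [b,1], for some b ∈ (0,1). Then for every integer N ≥ 2 and every a ∈ (0,v̲), there exists a Borel probability measure F on [0,1] such that: (1) F dominates G in the convex order, i.e. ∫ ψ dF ≥ ∫ ψ dG for every convex function ψ : [0,1] → ℝ (equivalently, G is a mean-preserving contraction of F); (2) the topological support of F has exactly N elements; (3) a belongs to the support of F. -/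
open MeasureTheory Set Filter

namespace MPS

/-- The lower quantile `Q_G(u) = inf{v ∈ [0,1] : G([0,v]) ≥ u}`. -/
noncomputable def QG (G : Measure ℝ) (u : ℝ) : ℝ :=
  sInf {v : ℝ | v ∈ Set.Icc (0:ℝ) 1 ∧ u ≤ (G (Set.Icc 0 v)).toReal}

end MPS

/-!
Let `m` be the mean of `G`; as the support of `G` is `[v̲, 1]` with `v̲ < 1`, we have
`v̲ ≤ m < 1`. For `x ≤ v̲`, every convex `ψ` lies below its chord over `[x, 1]` on the support
of `G`, so integrating gives `∫ ψ dG ≤ ∫ ψ dF_x`, where `F_x` is the law on `{x, 1}` with mean `m`.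
The equal-weight mixture of the `F_x` over `N - 1` distinct points `x ∈ (0, a]`, one of them `a`,
therefore dominates `G` in the convex order, and its support consists of these points and `1`.
-/

section ConvexOnIcc

variable {ψ : ℝ → ℝ} {x y : ℝ} {μ : Measure ℝ}

theorem ConvexOn.le_chord (hψ : ConvexOn ℝ (Icc x y) ψ) {v : ℝ} (hv : v ∈ Icc x y) :
    (y - x) * ψ v ≤ (y - v) * ψ x + (v - x) * ψ y := by
  have hxy : x ≤ y := hv.1.trans hv.2
  rcases hv.1.eq_or_lt with rfl | hxv
  · linarith
  rcases hv.2.eq_or_lt with rfl | hvy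
  · linarith
  exact hψ.secant_mono_aux1 (left_mem_Icc.2 hxy) (right_mem_Icc.2 hxy) hxv hvy

theorem ConvexOn.abs_le_of_mem_Icc (hψ : ConvexOn ℝ (Icc x y) ψ) {v : ℝ} (hv : v ∈ Icc x y) :
    |ψ v| ≤ |ψ x| + |ψ y| + 2 * |ψ ((x + y) / 2)| := by
  have hxy : x ≤ y := hv.1.trans hv.2
  have hx : x ∈ Icc x y := left_mem_Icc.2 hxy
  have hy : y ∈ Icc x y := right_mem_Icc.2 hxy
  have hv' : x + y - v ∈ Icc x y := ⟨by linarith [hv.2], by linarith [hv.1]⟩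
  have hmax : ∀ w ∈ Icc x y, ψ w ≤ max (ψ x) (ψ y) := fun w hw =>
    hψ.le_on_segment hx hy (by rwa [segment_eq_Icc hxy])
  -- `(x + y) / 2` is the midpoint of `v` and its reflection `x + y - v`
  have hmid : ψ ((x + y) / 2) ≤ (ψ v + ψ (x + y - v)) / 2 := by
    have h := hψ.2 hv hv' (by norm_num : (0:ℝ) ≤ 1 / 2) (by norm_num : (0:ℝ) ≤ 1 / 2)
      (by norm_num)
    simp only [smul_eq_mul] at h
    rwa [show 1 / 2 * v + 1 / 2 * (x + y - v) = (x + y) / 2 by ring, ← mul_add,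
      one_div_mul_eq_div] at h
  have hmax_le : max (ψ x) (ψ y) ≤ |ψ x| + |ψ y| :=
    max_le (by linarith [le_abs_self (ψ x), abs_nonneg (ψ y)])
      (by linarith [le_abs_self (ψ y), abs_nonneg (ψ x)])
  rw [abs_le]
  constructor
  · linarith [hmax _ hv', neg_abs_le (ψ ((x + y) / 2))]
  · linarith [hmax _ hv, abs_nonneg (ψ ((x + y) / 2))]

theorem ConvexOn.aestronglyMeasurable (hψ : ConvexOn ℝ (Icc x y) ψ)
    (hμ : ∀ᵐ v ∂μ, v ∈ Icc x y) : AEStronglyMeasurable ψ μ := by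
  have hcont : ContinuousOn ψ (Ioo x y) := by
    simpa only [interior_Icc] using hψ.continuousOn_interior
  have hcover : Icc x y ⊆ Ioo x y ∪ {x} ∪ {y} := by
    intro v hv
    rcases hv.1.eq_or_lt with rfl | hxv
    · exact Or.inl (Or.inr rfl)
    rcases hv.2.eq_or_lt with rfl | hvy
    · exact Or.inr rfl
    exact Or.inl (Or.inl ⟨hxv, hvy⟩)
  have hpoint : ∀ z : ℝ, AEStronglyMeasurable ψ (μ.restrict {z}) := fun z => by
    rw [Measure.restrict_singleton]
    exact aestronglyMeasurable_dirac.smul_measure _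
  rw [← Measure.restrict_eq_self_of_ae_mem (hμ.mono fun _ hv => hcover hv),
    aestronglyMeasurable_union_iff, aestronglyMeasurable_union_iff]
  exact ⟨⟨hcont.aestronglyMeasurable measurableSet_Ioo, hpoint x⟩, hpoint y⟩

theorem ConvexOn.integrable [IsFiniteMeasure μ] (hψ : ConvexOn ℝ (Icc x y) ψ)
    (hμ : ∀ᵐ v ∂μ, v ∈ Icc x y) : Integrable ψ μ :=
  (integrable_const _).mono' (hψ.aestronglyMeasurable hμ)
    (hμ.mono fun _ hv => (Real.norm_eq_abs _).trans_le (hψ.abs_le_of_mem_Icc hv))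

theorem ConvexOn.integral_le_chord [IsProbabilityMeasure μ]
    (hψ : ConvexOn ℝ (Icc x y) ψ) (hμ : ∀ᵐ v ∂μ, v ∈ Icc x y) :
    (y - x) * ∫ v, ψ v ∂μ ≤ (y - ∫ v, v ∂μ) * ψ x + (∫ v, v ∂μ - x) * ψ y := by
  have hid : Integrable (fun v => v) μ := (convexOn_id (convex_Icc x y)).integrable hμ
  have hx : Integrable (fun v => (y - v) * ψ x) μ := ((integrable_const y).sub hid).mul_const _
  have hy : Integrable (fun v => (v - x) * ψ y) μ := (hid.sub (integrable_const x)).mul_const _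
  calc (y - x) * ∫ v, ψ v ∂μ = ∫ v, (y - x) * ψ v ∂μ := (integral_const_mul _ _).symm
    _ ≤ ∫ v, ((y - v) * ψ x + (v - x) * ψ y) ∂μ :=
        integral_mono_ae ((hψ.integrable hμ).const_mul _) (hx.add hy)
          (hμ.mono fun _ hv => hψ.le_chord hv)
    _ = (y - ∫ v, v ∂μ) * ψ x + (∫ v, v ∂μ - x) * ψ y := by
        rw [integral_add hx hy,
          integral_mul_const, integral_mul_const, integral_sub (integrable_const y) hid,
          integral_sub hid (integrable_const x)]
        simp

end ConvexOnIcc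

theorem integral_id_lt_of_ae_le {μ : Measure ℝ} [IsProbabilityMeasure μ] {y : ℝ}
    (hint : Integrable (fun v => v) μ) (hle : ∀ᵐ v ∂μ, v ≤ y) (hlt : μ (Iio y) ≠ 0) :
    ∫ v, v ∂μ < y := by
  have hpos : 0 < ∫ v, (y - v) ∂μ := by
    rw [integral_pos_iff_support_of_nonneg_ae (hle.mono fun v hv => sub_nonneg.2 hv)
      ((integrable_const y).sub hint)]
    exact pos_iff_ne_zero.2 fun h =>
      hlt (measure_mono_null (fun v (hv : v < y) => sub_ne_zero.2 hv.ne') h)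
  rw [integral_sub (integrable_const y) hint] at hpos
  simpa using hpos

section TwoPointSpread

variable {x y m : ℝ}

/-- The law on `{x, y}` with mean `m`. -/
noncomputable def twoPointSpread (x y m : ℝ) : Measure ℝ :=
  ENNReal.ofReal ((y - m) / (y - x)) • Measure.dirac x +
    ENNReal.ofReal ((m - x) / (y - x)) • Measure.dirac y

theorem twoPointSpread_apply (s : Set ℝ) :
    twoPointSpread x y m s = ENNReal.ofReal ((y - m) / (y - x)) * s.indicator 1 x +
      ENNReal.ofReal ((m - x) / (y - x)) * s.indicator 1 y := by
  simp only [twoPointSpread, Measure.add_apply, Measure.smul_apply, Measure.dirac_apply,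
    smul_eq_mul]

theorem isProbabilityMeasure_twoPointSpread (hxm : x ≤ m) (hmy : m ≤ y) (hxy : x < y) :
    IsProbabilityMeasure (twoPointSpread x y m) := by
  constructor
  have hyx : y - x ≠ 0 := (sub_pos.2 hxy).ne'
  rw [twoPointSpread_apply, indicator_of_mem (mem_univ _), indicator_of_mem (mem_univ _),
    Pi.one_apply, Pi.one_apply, mul_one, mul_one, ← ENNReal.ofReal_add (by bound) (by bound),
    ← add_div, show y - m + (m - x) = y - x by ring, div_self hyx, ENNReal.ofReal_one]

theorem twoPointSpread_apply_ne_zero_iff (hxm : x < m) (hmy : m < y) {s : Set ℝ} :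
    twoPointSpread x y m s ≠ 0 ↔ x ∈ s ∨ y ∈ s := by
  have hp : 0 < (y - m) / (y - x) := div_pos (by linarith) (by linarith)
  have hq : 0 < (m - x) / (y - x) := div_pos (by linarith) (by linarith)
  by_cases hx : x ∈ s <;> by_cases hy : y ∈ s <;> simp [twoPointSpread_apply, hx, hy, hp, hq]

theorem integrable_twoPointSpread (f : ℝ → ℝ) : Integrable f (twoPointSpread x y m) :=
  ((integrable_dirac enorm_lt_top).smul_measure ENNReal.ofReal_ne_top).add_measure
    ((integrable_dirac enorm_lt_top).smul_measure ENNReal.ofReal_ne_top)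

theorem integral_twoPointSpread (hxm : x ≤ m) (hmy : m ≤ y) (f : ℝ → ℝ) :
    ∫ v, f v ∂twoPointSpread x y m = ((y - m) * f x + (m - x) * f y) / (y - x) := by
  rw [twoPointSpread, integral_add_measure
      ((integrable_dirac enorm_lt_top).smul_measure ENNReal.ofReal_ne_top)
      ((integrable_dirac enorm_lt_top).smul_measure ENNReal.ofReal_ne_top),
    integral_smul_measure, integral_smul_measure, integral_dirac, integral_dirac,
    ENNReal.toReal_ofReal (by bound), ENNReal.toReal_ofReal (by bound)]
  simp only [smul_eq_mul]
  ring

theorem integral_le_integral_twoPointSpread {μ : Measure ℝ} [IsProbabilityMeasure μ]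
    {ψ : ℝ → ℝ} (hψ : ConvexOn ℝ (Icc x y) ψ) (hμ : ∀ᵐ v ∂μ, v ∈ Icc x y) (hxy : x < y) :
    ∫ v, ψ v ∂μ ≤ ∫ v, ψ v ∂twoPointSpread x y (∫ v, v ∂μ) := by
  have hmean : ∫ v, v ∂μ ∈ Icc x y :=
    (convex_Icc x y).integral_mem isClosed_Icc hμ ((convexOn_id (convex_Icc x y)).integrable hμ)
  rw [integral_twoPointSpread hmean.1 hmean.2, le_div_iff₀ (sub_pos.2 hxy), mul_comm]
  exact hψ.integral_le_chord hμ

end TwoPointSpread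

section UniformMixture

variable {α ι : Type*} [MeasurableSpace α] {s : Finset ι} {μ : ι → Measure α}

noncomputable def uniformMixture (s : Finset ι) (μ : ι → Measure α) : Measure α :=
  (s.card : ENNReal)⁻¹ • ∑ i ∈ s, μ i

theorem uniformMixture_apply (t : Set α) :
    uniformMixture s μ t = (s.card : ENNReal)⁻¹ * ∑ i ∈ s, μ i t := by
  simp only [uniformMixture, Measure.smul_apply, Measure.finsetSum_apply, smul_eq_mul]

theorem isProbabilityMeasure_uniformMixture (hs : s.Nonempty)
    (hμ : ∀ i ∈ s, IsProbabilityMeasure (μ i)) : IsProbabilityMeasure (uniformMixture s μ) := by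
  constructor
  rw [uniformMixture_apply, Finset.sum_congr rfl fun i hi => (hμ i hi).measure_univ,
    Finset.sum_const, nsmul_eq_mul, mul_one]
  exact ENNReal.inv_mul_cancel (by simpa using hs.ne_empty) (ENNReal.natCast_ne_top _)

theorem uniformMixture_apply_ne_zero_iff {t : Set α} :
    uniformMixture s μ t ≠ 0 ↔ ∃ i ∈ s, μ i t ≠ 0 := by
  simp [uniformMixture_apply, Finset.sum_eq_zero_iff]

theorem le_integral_uniformMixture (hs : s.Nonempty) {f : α → ℝ}
    (hf : ∀ i ∈ s, Integrable f (μ i)) {c : ℝ} (hc : ∀ i ∈ s, c ≤ ∫ v, f v ∂μ i) :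
    c ≤ ∫ v, f v ∂uniformMixture s μ := by
  have hcard : (0 : ℝ) < s.card := by exact_mod_cast hs.card_pos
  rw [uniformMixture, integral_smul_measure, integral_finsetSum_measure hf, ENNReal.toReal_inv,
    ENNReal.toReal_natCast, smul_eq_mul, le_inv_mul_iff₀ hcard]
  simpa using Finset.card_nsmul_le_sum s _ c hc

end UniformMixture

/-- For closed `C ⊆ ℝ`, the open-set characterisation of `μ.support = C`. -/
def HasSupport {α : Type*} [TopologicalSpace α] [MeasurableSpace α] (μ : Measure α)
    (C : Set α) : Prop :=
  ∀ s : Set α, IsOpen s → (μ s ≠ 0 ↔ (s ∩ C).Nonempty)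

theorem HasSupport.ae_mem {α : Type*} [TopologicalSpace α] [MeasurableSpace α]
    {μ : Measure α} {C : Set α} (h : HasSupport μ C) (hC : IsClosed C) : ∀ᵐ v ∂μ, v ∈ C := by
  refine mem_ae_iff.2 (not_not.1 fun hC' => ?_)
  simpa using (h _ hC.isOpen_compl).1 hC'

theorem HasSupport.integral_id_mem_Ico {μ : Measure ℝ} [IsProbabilityMeasure μ] {x y : ℝ}
    (h : HasSupport μ (Icc x y)) (hxy : x < y) : ∫ v, v ∂μ ∈ Ico x y := by
  have hμ := h.ae_mem isClosed_Icc
  have hid : Integrable (fun v => v) μ := (convexOn_id (convex_Icc x y)).integrable hμ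
  exact ⟨((convex_Icc x y).integral_mem isClosed_Icc hμ hid).1, integral_id_lt_of_ae_le hid
    (hμ.mono fun _ hv => hv.2) ((h _ isOpen_Iio).2 ⟨x, hxy, le_rfl, hxy.le⟩)⟩

theorem hasSupport_uniformMixture_twoPointSpread {P : Finset ℝ} (hP : P.Nonempty) {y m : ℝ}
    (hPm : ∀ p ∈ P, p < m) (hmy : m < y) :
    HasSupport (uniformMixture P fun p => twoPointSpread p y m) ↑(insert y P) := fun s _ => by
  rw [uniformMixture_apply_ne_zero_iff]
  constructor
  · rintro ⟨p, hp, hps⟩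
    rcases (twoPointSpread_apply_ne_zero_iff (hPm p hp) hmy).1 hps with hps | hys
    · exact ⟨p, hps, Finset.mem_insert_of_mem hp⟩
    · exact ⟨y, hys, Finset.mem_insert_self _ _⟩
  · rintro ⟨z, hzs, hz⟩
    rcases Finset.mem_insert.1 hz with rfl | hzP
    · obtain ⟨p, hp⟩ := hP
      exact ⟨p, hp, (twoPointSpread_apply_ne_zero_iff (hPm p hp) hmy).2 (Or.inr hzs)⟩
    · exact ⟨z, hzP, (twoPointSpread_apply_ne_zero_iff (hPm z hzP) hmy).2 (Or.inl hzs)⟩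

theorem exists_finset_card_eq_subset_Ioc {a : ℝ} (ha : 0 < a) {n : ℕ} (hn : n ≠ 0) :
    ∃ P : Finset ℝ, P.card = n ∧ a ∈ P ∧ ∀ p ∈ P, p ∈ Ioc 0 a := by
  have hanti : StrictAnti fun k : ℕ => a / (k + 1) := fun k j hkj =>
    div_lt_div_of_pos_left ha (by positivity) (by gcongr)
  refine ⟨(Finset.range n).image fun k : ℕ => a / (k + 1), ?_, ?_, ?_⟩
  · rw [Finset.card_image_of_injective _ hanti.injective, Finset.card_range]
  · exact Finset.mem_image.2 ⟨0, Finset.mem_range.2 (Nat.pos_of_ne_zero hn), by simp⟩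
  · simp only [Finset.forall_mem_image]
    exact fun k _ => ⟨by positivity, div_le_self ha.le (by simp)⟩

namespace MPS

theorem finite_support_mean_preserving_spread_general
    (G : Measure ℝ) (hG : IsProbabilityMeasure G)
    (vlow : ℝ) (hv : vlow ∈ Set.Ioo (0:ℝ) 1)
    (hsupp : ∀ s : Set ℝ, IsOpen s → (G s ≠ 0 ↔ (s ∩ Set.Icc vlow 1).Nonempty))
    (N : ℕ) (hN : 2 ≤ N) (a : ℝ) (ha : a ∈ Set.Ioo 0 vlow) :
    ∃ F : Measure ℝ, IsProbabilityMeasure F ∧ F (Set.Icc 0 1) = 1 ∧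
      (∀ ψ : ℝ → ℝ, ConvexOn ℝ (Set.Icc 0 1) ψ → (∫ x, ψ x ∂G) ≤ ∫ x, ψ x ∂F) ∧
      ∃ S : Finset ℝ, S.card = N ∧ a ∈ S ∧
        ∀ s : Set ℝ, IsOpen s → (F s ≠ 0 ↔ (s ∩ (S : Set ℝ)).Nonempty) := by
  obtain ⟨P, hPcard, haP, hP⟩ := exists_finset_card_eq_subset_Ioc ha.1 (n := N - 1) (by omega)
  have hGae : ∀ᵐ v ∂G, v ∈ Icc vlow 1 := HasSupport.ae_mem hsupp isClosed_Icc
  set m := ∫ v, v ∂G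
  obtain ⟨hvm, hm1⟩ : m ∈ Ico vlow 1 := HasSupport.integral_id_mem_Ico hsupp hv.2
  have hPm : ∀ p ∈ P, p < m := fun p hp => (hP p hp).2.trans_lt (ha.2.trans_le hvm)
  set F := uniformMixture P fun p => twoPointSpread p 1 m
  have hF : IsProbabilityMeasure F := isProbabilityMeasure_uniformMixture ⟨a, haP⟩ fun p hp =>
    isProbabilityMeasure_twoPointSpread (hPm p hp).le hm1.le ((hPm p hp).trans hm1)
  have hFsupp : HasSupport F ↑(insert 1 P) :=
    hasSupport_uniformMixture_twoPointSpread ⟨a, haP⟩ hPm hm1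
  refine ⟨F, hF, ?_, fun ψ hψ => ?_, insert 1 P, ?_, Finset.mem_insert_of_mem haP, hFsupp⟩
  · refine (prob_compl_eq_zero_iff measurableSet_Icc).1 (mem_ae_iff.1 ?_)
    filter_upwards [hFsupp.ae_mem (Finset.finite_toSet _).isClosed] with z hz
    rcases Finset.mem_insert.1 hz with rfl | hzP
    exacts [right_mem_Icc.2 zero_le_one, ⟨(hP z hzP).1.le, ((hPm z hzP).trans hm1).le⟩]
  · refine le_integral_uniformMixture ⟨a, haP⟩ (fun p _ => integrable_twoPointSpread ψ)
      fun p hp => integral_le_integral_twoPointSpread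
        (hψ.subset (Icc_subset_Icc (hP p hp).1.le le_rfl) (convex_Icc _ _))
        (hGae.mono fun _ hw => Icc_subset_Icc ((hP p hp).2.trans ha.2.le) le_rfl hw)
        ((hPm p hp).trans hm1)
  · rw [Finset.card_insert_of_notMem fun h1P => (hm1.trans (hPm 1 h1P)).false, hPcard]
    omega

/-- Let `G` be a Borel probability measure on `[0,1]` with topological
support `[v̲,1]` for some `v̲ ∈ (0,1)`, whose lower quantile is strictly increasing on
`(0,b)` and identically `1` on `[b,1]`, for some `b ∈ (0,1)`. Then for every integer
`N ≥ 2` and every `a ∈ (0,v̲)` there is a Borel probability measure `F` on `[0,1]`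
dominating `G` in the convex order whose support has exactly `N` points, one of which
is `a`. -/
theorem finite_support_mean_preserving_spread
    (G : Measure ℝ) (hG : IsProbabilityMeasure G) (hG01 : G (Set.Icc 0 1) = 1)
    (vlow b : ℝ) (hv : vlow ∈ Set.Ioo (0:ℝ) 1) (hb : b ∈ Set.Ioo (0:ℝ) 1)
    (hsupp : ∀ s : Set ℝ, IsOpen s → (G s ≠ 0 ↔ (s ∩ Set.Icc vlow 1).Nonempty))
    (hQmono : StrictMonoOn (QG G) (Set.Ioo 0 b))
    (hQtop : ∀ u ∈ Set.Icc b 1, QG G u = 1)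
    (N : ℕ) (hN : 2 ≤ N) (a : ℝ) (ha : a ∈ Set.Ioo 0 vlow) :
    ∃ F : Measure ℝ, IsProbabilityMeasure F ∧ F (Set.Icc 0 1) = 1 ∧
      (∀ ψ : ℝ → ℝ, ConvexOn ℝ (Set.Icc 0 1) ψ → (∫ x, ψ x ∂G) ≤ ∫ x, ψ x ∂F) ∧
      ∃ S : Finset ℝ, S.card = N ∧ a ∈ S ∧
        ∀ s : Set ℝ, IsOpen s → (F s ≠ 0 ↔ (s ∩ (S : Set ℝ)).Nonempty) :=
  finite_support_mean_preserving_spread_general G hG vlow hv hsupp N hN a ha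

end MPS
end
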